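/- Let λ > 0, L : ℝ^{m×n} → ℝ continuous, and let W be a local minimum of 𝓛_*(W) = L(W) + λ‖W‖_* over all m×n matrices. If A ∈ ℝ^{m×r}, B ∈ ℝ^{n×r} satisfy W = ABᵀ and AᵀA = BᵀB, then (A, B) is a local minimum of 𝓛_{L2}(A,B) = L(ABᵀ) + (λ/2)(‖A‖_F² + ‖B‖_F²). -/

import Mathlib

open Matrix

/-- Squared Frobenius norm of a real matrix. -/
noncomputable def frobSq {m n : ℕ} (A : Matrix (Fin m) (Fin n) ℝ) : ℝ :=
  ∑ i, ∑ j, (A i j) ^ 2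

/-- Frobenius norm. -/
noncomputable def frobNorm {m n : ℕ} (A : Matrix (Fin m) (Fin n) ℝ) : ℝ :=
  Real.sqrt (frobSq A)

lemma wwT_posSemidef {m n : ℕ} (W : Matrix (Fin m) (Fin n) ℝ) :
    (W * Wᵀ).PosSemidef := by
  simpa [Matrix.conjTranspose_eq_transpose_of_trivial] using
    W.posSemidef_self_mul_conjTranspose

/-- Nuclear norm: trace of the PSD square root of `W * Wᵀ`. -/
noncomputable def nuclearNorm {m n : ℕ} (W : Matrix (Fin m) (Fin n) ℝ) : ℝ :=
  ((wwT_posSemidef W).1.eigenvectorUnitary.1 *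
    diagonal (Real.sqrt ∘ (wwT_posSemidef W).1.eigenvalues) *
    (star (wwT_posSemidef W).1.eigenvectorUnitary : Matrix (Fin m) (Fin m) ℝ)).trace

attribute [local instance] Matrix.normedAddCommGroup Matrix.normedSpace

/-! The factorized objective dominates the nuclear one pulled back along the continuous map
`(A', B') ↦ A' B'ᵀ`, because `‖A' B'ᵀ‖_* ≤ (‖A'‖_F² + ‖B'‖_F²) / 2` for every pair, and the two
agree at a balanced pair; so a local minimum of the nuclear objective at `A Bᵀ` pulls back to one
of the factorized objective at `(A, B)`. For the inequality, take orthogonal `U` and a partial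
isometry `V` from the singular value decomposition of `M = A' B'ᵀ`, so that
`‖M‖_* = tr (Uᵀ M V) = tr ((A'ᵀ U)ᵀ (B'ᵀ V))`, and apply `tr (Xᵀ Y) ≤ (‖X‖_F² + ‖Y‖_F²) / 2`. -/

lemma frobSq_eq_trace {m n : ℕ} (X : Matrix (Fin m) (Fin n) ℝ) :
    frobSq X = (X * Xᵀ).trace := by
  simp [frobSq, Matrix.trace, Matrix.diag, Matrix.mul_apply, sq]

lemma frobSq_nonneg {m n : ℕ} (X : Matrix (Fin m) (Fin n) ℝ) : 0 ≤ frobSq X := by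
  unfold frobSq; positivity

lemma frobSq_transpose {m n : ℕ} (X : Matrix (Fin m) (Fin n) ℝ) : frobSq Xᵀ = frobSq X :=
  Finset.sum_comm

lemma frobSq_eq_of_transpose_mul_self_eq {m n r : ℕ} {A : Matrix (Fin m) (Fin r) ℝ}
    {B : Matrix (Fin n) (Fin r) ℝ} (h : Aᵀ * A = Bᵀ * B) : frobSq A = frobSq B := by
  rw [frobSq_eq_trace, frobSq_eq_trace, trace_mul_comm A, h, trace_mul_comm Bᵀ]

lemma trace_transpose_mul_le {m n : ℕ} (X Y : Matrix (Fin m) (Fin n) ℝ) :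
    (Xᵀ * Y).trace ≤ (frobSq X + frobSq Y) / 2 := by
  have htr : (Xᵀ * Y).trace = ∑ i, ∑ j, X i j * Y i j := by
    simp only [Matrix.trace, Matrix.diag, Matrix.mul_apply, Matrix.transpose_apply]
    exact Finset.sum_comm
  have hfrob : (frobSq X + frobSq Y) / 2 = ∑ i, ∑ j, (X i j ^ 2 + Y i j ^ 2) / 2 := by
    simp only [frobSq, ← Finset.sum_add_distrib, ← Finset.sum_div]
  rw [htr, hfrob]
  gcongr with i _ j _
  nlinarith [sq_nonneg (X i j - Y i j)]

lemma frobSq_mul_le_of_isIdempotentElem {m n k : ℕ} (X : Matrix (Fin m) (Fin n) ℝ)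
    {V : Matrix (Fin n) (Fin k) ℝ} (hV : IsIdempotentElem (V * Vᵀ)) :
    frobSq (X * V) ≤ frobSq X := by
  set P := V * Vᵀ
  have hPsymm : Pᵀ = P := by simp [P, transpose_mul]
  have hQ : X * (1 - P) * (X * (1 - P))ᵀ = X * (1 - P) * Xᵀ := by
    rw [transpose_mul, transpose_sub, transpose_one, hPsymm, Matrix.mul_assoc,
      ← Matrix.mul_assoc (1 - P), hV.one_sub.eq, Matrix.mul_assoc]
  have hsplit : frobSq X = frobSq (X * V) + frobSq (X * (1 - P)) := by
    rw [frobSq_eq_trace, frobSq_eq_trace, frobSq_eq_trace, hQ, transpose_mul]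
    simp only [Matrix.mul_sub, Matrix.sub_mul, Matrix.mul_one, trace_sub, P, Matrix.mul_assoc]
    ring
  linarith [frobSq_nonneg (X * (1 - P))]

lemma nuclearNorm_eq_sum_sqrt_eigenvalues {m n : ℕ} (M : Matrix (Fin m) (Fin n) ℝ) :
    nuclearNorm M = ∑ i, √((wwT_posSemidef M).1.eigenvalues i) := by
  rw [nuclearNorm, trace_mul_cycle, Unitary.coe_star_mul_self, Matrix.one_mul, trace_diagonal]
  rfl

lemma exists_isIdempotentElem_nuclearNorm_eq_trace {m n : ℕ} (M : Matrix (Fin m) (Fin n) ℝ) :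
    ∃ (U : Matrix (Fin m) (Fin m) ℝ) (V : Matrix (Fin n) (Fin m) ℝ),
      IsIdempotentElem (U * Uᵀ) ∧ IsIdempotentElem (V * Vᵀ) ∧
        nuclearNorm M = (Uᵀ * M * V).trace := by
  set hH := (wwT_posSemidef M).1
  set U : Matrix (Fin m) (Fin m) ℝ := (hH.eigenvectorUnitary : Matrix (Fin m) (Fin m) ℝ)
  set s : Fin m → ℝ := fun i => √(hH.eigenvalues i)
  have hUU : U * Uᵀ = 1 := by
    simpa [U, star_eq_conjTranspose] using Unitary.coe_mul_star_self hH.eigenvectorUnitary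
  have hdiag : Uᵀ * (M * Mᵀ) * U = diagonal (s * s) := by
    have h := hH.conjStarAlgAut_star_eigenvectorUnitary
    rw [Unitary.conjStarAlgAut_star_apply] at h
    have hs : s * s = hH.eigenvalues := funext fun i => Real.mul_self_sqrt
      ((wwT_posSemidef M).eigenvalues_nonneg i)
    simpa [U, hs, star_eq_conjTranspose] using h
  -- the columns of `V` are the right singular vectors `Mᵀ uᵢ / σᵢ` (zero where `σᵢ = 0`)
  set V := Mᵀ * U * diagonal s⁻¹
  have hMV : Uᵀ * M * V = diagonal s := by
    calc Uᵀ * M * V = Uᵀ * (M * Mᵀ) * U * diagonal s⁻¹ := by simp only [V, Matrix.mul_assoc]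
      _ = diagonal s := by
          rw [hdiag, diagonal_mul_diagonal]
          exact congrArg diagonal (funext fun i => mul_self_mul_inv (s i))
  have hVV : Vᵀ * V = diagonal (s * s⁻¹) := by
    calc Vᵀ * V = diagonal s⁻¹ * (Uᵀ * (M * Mᵀ) * U) * diagonal s⁻¹ := by
          simp only [V, transpose_mul, transpose_transpose, diagonal_transpose, Matrix.mul_assoc]
      _ = diagonal (s * s⁻¹) := by
          rw [hdiag, diagonal_mul_diagonal, diagonal_mul_diagonal]
          congr 1; funext i; rcases eq_or_ne (s i) 0 with h | h <;> simp [h]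
  refine ⟨U, V, by rw [hUU]; exact .one, ?_, ?_⟩
  · have hV : V * diagonal (s * s⁻¹) = V := by
      simp only [V, Matrix.mul_assoc, diagonal_mul_diagonal]
      congr 3; funext i; rcases eq_or_ne (s i) 0 with h | h <;> simp [h]
    calc V * Vᵀ * (V * Vᵀ) = V * (Vᵀ * V) * Vᵀ := by simp only [Matrix.mul_assoc]
      _ = V * Vᵀ := by rw [hVV, hV]
  · rw [hMV, trace_diagonal, nuclearNorm_eq_sum_sqrt_eigenvalues]

lemma nuclearNorm_mul_transpose_le {m n r : ℕ} (A : Matrix (Fin m) (Fin r) ℝ)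
    (B : Matrix (Fin n) (Fin r) ℝ) : nuclearNorm (A * Bᵀ) ≤ (frobSq A + frobSq B) / 2 := by
  obtain ⟨U, V, hU, hV, hnuc⟩ := exists_isIdempotentElem_nuclearNorm_eq_trace (A * Bᵀ)
  have hAU := frobSq_mul_le_of_isIdempotentElem Aᵀ hU
  have hBV := frobSq_mul_le_of_isIdempotentElem Bᵀ hV
  rw [frobSq_transpose] at hAU hBV
  calc nuclearNorm (A * Bᵀ) = ((Aᵀ * U)ᵀ * (Bᵀ * V)).trace := by
        rw [hnuc]; simp only [transpose_mul, transpose_transpose, Matrix.mul_assoc]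
    _ ≤ (frobSq (Aᵀ * U) + frobSq (Bᵀ * V)) / 2 := trace_transpose_mul_le _ _
    _ ≤ (frobSq A + frobSq B) / 2 := by linarith

lemma nuclearNorm_mul_transpose_of_transpose_mul_self_eq {m n r : ℕ}
    {A : Matrix (Fin m) (Fin r) ℝ} {B : Matrix (Fin n) (Fin r) ℝ} (hbal : Aᵀ * A = Bᵀ * B) :
    nuclearNorm (A * Bᵀ) = (frobSq A + frobSq B) / 2 := by
  -- `A Aᵀ` is the PSD square root of `(A Bᵀ)(A Bᵀ)ᵀ = A (Bᵀ B) Aᵀ = (A Aᵀ)²`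
  have hsq : (A * Aᵀ) ^ 2 = A * Bᵀ * (A * Bᵀ)ᵀ := by
    simp only [pow_two, transpose_mul, transpose_transpose, ← Matrix.mul_assoc]
    rw [Matrix.mul_assoc A Aᵀ A, hbal, ← Matrix.mul_assoc]
  have hsqrt : (wwT_posSemidef (A * Bᵀ)).1.cfc Real.sqrt = A * Aᵀ := by
    open scoped MatrixOrder in
    rw [← Matrix.IsHermitian.cfc_eq, ← hsq, ← cfcₙ_eq_cfc,
      ← CFC.sqrt_eq_real_sqrt _ (by rw [hsq]; exact (wwT_posSemidef _).nonneg)]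
    exact CFC.sqrt_sq _ (wwT_posSemidef A).nonneg
  have hnuc : nuclearNorm (A * Bᵀ) = frobSq A := by
    rw [nuclearNorm, frobSq_eq_trace, ← hsqrt, Matrix.IsHermitian.cfc,
      Unitary.conjStarAlgAut_apply]
    rfl
  linarith [frobSq_eq_of_transpose_mul_self_eq hbal]

theorem localMin_nuclear_to_localMin_L2_general {m n r : ℕ}
    (lam : ℝ) (hlam : 0 < lam)
    (L : Matrix (Fin m) (Fin n) ℝ → ℝ)
    (W : Matrix (Fin m) (Fin n) ℝ)
    (hW : IsLocalMin (fun W' : Matrix (Fin m) (Fin n) ℝ =>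
      L W' + lam * nuclearNorm W') W)
    (A : Matrix (Fin m) (Fin r) ℝ) (B : Matrix (Fin n) (Fin r) ℝ)
    (hfac : W = A * Bᵀ) (hbal : Aᵀ * A = Bᵀ * B) :
    IsLocalMin
      (fun p : Matrix (Fin m) (Fin r) ℝ × Matrix (Fin n) (Fin r) ℝ =>
        L (p.1 * p.2ᵀ) + lam / 2 * (frobSq p.1 + frobSq p.2)) (A, B) := by
  subst hfac
  have hmul : ContinuousAt (fun p : Matrix (Fin m) (Fin r) ℝ × Matrix (Fin n) (Fin r) ℝ =>
      p.1 * p.2ᵀ) (A, B) :=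
    (continuous_fst.matrix_mul continuous_snd.matrix_transpose).continuousAt
  filter_upwards [hmul.eventually hW] with p hp
  calc L (A * Bᵀ) + lam / 2 * (frobSq A + frobSq B)
      = L (A * Bᵀ) + lam * nuclearNorm (A * Bᵀ) := by
        rw [nuclearNorm_mul_transpose_of_transpose_mul_self_eq hbal]; ring
    _ ≤ L (p.1 * p.2ᵀ) + lam * nuclearNorm (p.1 * p.2ᵀ) := hp
    _ ≤ L (p.1 * p.2ᵀ) + lam / 2 * (frobSq p.1 + frobSq p.2) := by
        nlinarith [nuclearNorm_mul_transpose_le p.1 p.2]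

/-- if `W` is a local minimum of the nuclear-norm regularized loss
`L(W) + λ‖W‖_*` (λ > 0, L continuous) over all matrices, then any balanced
factorization `W = ABᵀ`, `AᵀA = BᵀB` is a local minimum of the L2-regularized
factorized loss `L(ABᵀ) + (λ/2)(‖A‖_F² + ‖B‖_F²)`. -/
theorem localMin_nuclear_to_localMin_L2 {m n r : ℕ}
    (lam : ℝ) (hlam : 0 < lam)
    (L : Matrix (Fin m) (Fin n) ℝ → ℝ) (hL : Continuous L)
    (W : Matrix (Fin m) (Fin n) ℝ)
    (hW : IsLocalMin (fun W' : Matrix (Fin m) (Fin n) ℝ =>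
      L W' + lam * nuclearNorm W') W)
    (A : Matrix (Fin m) (Fin r) ℝ) (B : Matrix (Fin n) (Fin r) ℝ)
    (hfac : W = A * Bᵀ) (hbal : Aᵀ * A = Bᵀ * B) :
    IsLocalMin
      (fun p : Matrix (Fin m) (Fin r) ℝ × Matrix (Fin n) (Fin r) ℝ =>
        L (p.1 * p.2ᵀ) + lam / 2 * (frobSq p.1 + frobSq p.2)) (A, B) :=
  localMin_nuclear_to_localMin_L2_general lam hlam L W hW A B hfac hbal
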